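/- Let x and γ be n×n real matrices. Then the map s ↦ exp(x + s·γ) (matrix exponential of the line through x in direction γ) is twice differentiable in s, and its second derivative at s = 0 equals exp(x)·( D² + C ), where D = ∑_{i=0}^∞ ((−1)^i/(i+1)!)·ad_x^i(γ) = dexp(−x)(γ) (and D² is the matrix square of D), and C = ∑_{i=1}^∞ ((−1)^i/(i+1)!) ∑_{r=0}^{i−1} ad_x^r( ad_γ( ad_x^{i−1−r}(γ) ) ). (Lemma 2 of the Appendix, the second-directional-derivative formula Δ = X·(dexp_{−x}(γ))² + X·C.) -/

import Mathlib

/-!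
Along the line `s ↦ b = a + s • g`, differentiating the exponential series termwise gives
`∑ₖ (1/k!) ∑ᵢ bᵏ⁻¹⁻ⁱ g bⁱ`. Right multiplication by `b` is `L_b - ad_b`, where left
multiplication `L_b` commutes with `ad_b`, so `∑ᵢ bᵏ⁻¹⁻ⁱ g bⁱ = ∑ᵢ (-1)ⁱ C(k, i+1) bᵏ⁻¹⁻ⁱ ad_bⁱ g`;
these are exactly the terms of the Cauchy product of the series of `exp b` and `dexp_{-b} g`,
so the first derivative is `exp b * dexp_{-b} g`. The derivative of `ad_bⁱ g` along the line is
`∑ᵣ ad_bʳ ad_g ad_bⁱ⁻¹⁻ʳ g`, so differentiating `dexp_{-b} g` termwise as well and using the product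
rule gives `exp b * (D² + C)`. Both termwise differentiations are justified by bounds of the form
`k Mᵏ⁻¹ / k!` on the differentiated terms, uniform for `s` in a unit ball.
-/

open NormedSpace

section

attribute [local instance] Matrix.normedAddCommGroup Matrix.normedSpace

/-- The adjoint operator `ad_x : y ↦ x*y - y*x` on `n × n` real matrices. -/
noncomputable def adM {n : ℕ} (x : Matrix (Fin n) (Fin n) ℝ) :
    Module.End ℝ (Matrix (Fin n) (Fin n) ℝ) :=
  LinearMap.mulLeft ℝ x - LinearMap.mulRight ℝ x

end

open Finset LieAlgebra
open scoped Nat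

attribute [local instance] LieRing.ofAssociativeRing

section Ring

variable {R : Type*} [Ring R]

theorem sum_range_succ_pow_mul_pow (x y : R) (k : ℕ) :
    ∑ i ∈ range (k + 1), x ^ (k - i) * y ^ i =
      x ^ k + (∑ i ∈ range k, x ^ (k - 1 - i) * y ^ i) * y := by
  rw [sum_range_succ', sum_mul, add_comm]
  simp only [Nat.sub_zero, pow_zero, mul_one, mul_assoc, ← pow_succ, Nat.sub_sub, add_comm 1]

theorem Commute.sum_pow_mul_sub_pow {x a : R} (h : Commute x a) (k : ℕ) :
    ∑ i ∈ range k, x ^ (k - 1 - i) * (x - a) ^ i =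
      ∑ i ∈ range k, ((-1) ^ i * (k.choose (i + 1) : ℤ)) • (x ^ (k - 1 - i) * a ^ i) := by
  induction k with
  | zero => simp
  | succ k ih =>
    set Q := ∑ i ∈ range k, ((-1) ^ i * (k.choose (i + 1) : ℤ)) • (x ^ (k - 1 - i) * a ^ i)
    have pascal : ∑ i ∈ range (k + 1),
          ((-1) ^ i * ((k + 1).choose (i + 1) : ℤ)) • (x ^ (k - i) * a ^ i) =
        ∑ i ∈ range (k + 1), ((-1) ^ i * (k.choose (i + 1) : ℤ)) • (x ^ (k - i) * a ^ i) +
        ∑ i ∈ range (k + 1), ((-1) ^ i * (k.choose i : ℤ)) • (x ^ (k - i) * a ^ i) := by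
      rw [← sum_add_distrib]
      refine sum_congr rfl fun i _ => ?_
      rw [Nat.choose_succ_succ', ← add_smul]
      push_cast; ring_nf
    have hchoose_succ :
        ∑ i ∈ range (k + 1), ((-1) ^ i * (k.choose (i + 1) : ℤ)) • (x ^ (k - i) * a ^ i) =
          Q * x := by
      rw [sum_range_succ, Nat.choose_succ_self, Nat.cast_zero, mul_zero, zero_smul, add_zero,
        sum_mul]
      refine sum_congr rfl fun i hi => ?_
      rw [mem_range] at hi
      rw [smul_mul_assoc, mul_assoc, ((h.pow_right i).symm).eq, ← mul_assoc, ← pow_succ,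
        show k - 1 - i + 1 = k - i by omega]
    have hchoose :
        ∑ i ∈ range (k + 1), ((-1) ^ i * (k.choose i : ℤ)) • (x ^ (k - i) * a ^ i) =
          x ^ k - Q * a := by
      rw [sum_range_succ', sum_mul, sub_eq_add_neg, ← sum_neg_distrib, add_comm]
      simp only [pow_zero, Nat.choose_zero_right, Nat.cast_one, mul_one, one_smul, Nat.sub_zero]
      congr 1
      refine sum_congr rfl fun i _ => ?_
      rw [smul_mul_assoc, mul_assoc, ← pow_succ, ← neg_smul, pow_succ, Nat.sub_sub, add_comm 1 i]
      ring_nf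
    rw [Nat.add_sub_cancel, sum_range_succ_pow_mul_pow, ih, pascal, hchoose_succ, hchoose]
    noncomm_ring

end Ring

theorem sum_pow_mul_mul_pow_eq_sum_ad {K A : Type*} [CommRing K] [Ring A] [Algebra K A]
    (b g : A) (k : ℕ) :
    ∑ i ∈ range k, b ^ (k - 1 - i) * g * b ^ i =
      ∑ i ∈ range k,
        ((-1) ^ i * (k.choose (i + 1) : K)) • (b ^ (k - 1 - i) * (ad K A b ^ i) g) := by
  have hR : LinearMap.mulRight K b = LinearMap.mulLeft K b - ad K A b := by
    rw [ad_eq_lmul_left_sub_lmul_right, Pi.sub_apply, sub_sub_cancel]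
  have hcomm : Commute (LinearMap.mulLeft K b) (ad K A b) := by
    rw [ad_eq_lmul_left_sub_lmul_right, Pi.sub_apply]
    exact (Commute.refl _).sub_right (LinearMap.commute_mulLeft_right b b)
  have := congrArg (· g) (hcomm.sum_pow_mul_sub_pow k)
  simp only [LinearMap.sum_apply, LinearMap.smul_apply, Module.End.mul_apply, ← hR,
    LinearMap.pow_mulLeft, LinearMap.pow_mulRight, LinearMap.mulLeft_apply,
    LinearMap.mulRight_apply, ← Int.cast_smul_eq_zsmul K] at this
  simpa [mul_assoc] using this

lemma summable_nat_mul_pow_pred_div_factorial (M : ℝ) :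
    Summable fun k : ℕ => k * M ^ (k - 1) / k ! := by
  rw [← summable_nat_add_iff 1]
  refine (Real.summable_pow_div_factorial M).congr fun k => ?_
  rw [Nat.factorial_succ, Nat.add_sub_cancel]
  push_cast
  field_simp

theorem hasDerivAt_tsum_add_smul {V E : Type*} [NormedAddCommGroup V] [NormedSpace ℝ V]
    [NormedAddCommGroup E] [NormedSpace ℝ E] [CompleteSpace E] {F F' : ℕ → V → E}
    {u : ℕ → ℝ → ℝ} (a g : V)
    (hF : ∀ k (s : ℝ), HasDerivAt (fun s : ℝ => F k (a + s • g)) (F' k (a + s • g)) s)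
    (hF' : ∀ k b M, ‖b‖ ≤ M → ‖F' k b‖ ≤ u k M) (hu : ∀ M, Summable (u · M))
    (hsum : ∀ b, Summable (F · b)) (s₀ : ℝ) :
    HasDerivAt (fun s : ℝ => ∑' k, F k (a + s • g)) (∑' k, F' k (a + s₀ • g)) s₀ := by
  have hball : ∀ s ∈ Metric.ball s₀ 1, ‖a + s • g‖ ≤ ‖a + s₀ • g‖ + ‖g‖ := fun s hs => by
    have hs' : ‖s - s₀‖ ≤ 1 := (mem_ball_iff_norm.mp hs).le
    calc ‖a + s • g‖ = ‖(a + s₀ • g) + (s - s₀) • g‖ := by rw [sub_smul]; abel_nf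
      _ ≤ ‖a + s₀ • g‖ + ‖s - s₀‖ * ‖g‖ := (norm_add_le _ _).trans_eq (by rw [norm_smul])
      _ ≤ ‖a + s₀ • g‖ + ‖g‖ := by gcongr; exact mul_le_of_le_one_left (norm_nonneg g) hs'
  exact hasDerivAt_tsum_of_isPreconnected (hu _) Metric.isOpen_ball
    (convex_ball s₀ 1).isPreconnected (fun k s _ => hF k s) (fun k s hs => hF' k _ _ (hball s hs))
    (Metric.mem_ball_self one_pos) (hsum _) (Metric.mem_ball_self one_pos)

section NormedRing

variable {𝔸 : Type*} [NormedRing 𝔸]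

-- Stated with a factor `y` because `‖b ^ 0‖ = ‖1‖` may exceed `1`.
lemma norm_pow_mul_le (b y : 𝔸) (i : ℕ) : ‖b ^ i * y‖ ≤ ‖b‖ ^ i * ‖y‖ := by
  induction i with
  | zero => simp
  | succ i ih =>
    rw [pow_succ', mul_assoc, pow_succ', mul_assoc]
    exact (norm_mul_le _ _).trans (mul_le_mul_of_nonneg_left ih (norm_nonneg b))

lemma norm_mul_pow_le (y b : 𝔸) (i : ℕ) : ‖y * b ^ i‖ ≤ ‖y‖ * ‖b‖ ^ i := by
  induction i with
  | zero => simp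
  | succ i ih =>
    rw [pow_succ, ← mul_assoc, pow_succ, ← mul_assoc]
    exact (norm_mul_le _ _).trans (mul_le_mul_of_nonneg_right ih (norm_nonneg b))

lemma norm_sum_pow_mul_mul_pow_le (b g : 𝔸) (k : ℕ) :
    ‖∑ i ∈ range k, b ^ (k - 1 - i) * g * b ^ i‖ ≤ k * ‖b‖ ^ (k - 1) * ‖g‖ := by
  refine (norm_sum_le _ _).trans ?_
  calc ∑ i ∈ range k, ‖b ^ (k - 1 - i) * g * b ^ i‖
      ≤ ∑ i ∈ range k, ‖b‖ ^ (k - 1) * ‖g‖ := sum_le_sum fun i hi => by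
        rw [mem_range] at hi
        calc ‖b ^ (k - 1 - i) * g * b ^ i‖ ≤ ‖b‖ ^ (k - 1 - i) * ‖g‖ * ‖b‖ ^ i :=
              (norm_mul_pow_le _ b i).trans
                (mul_le_mul_of_nonneg_right (norm_pow_mul_le b g _) (by positivity))
          _ = ‖b‖ ^ (k - 1) * ‖g‖ := by
              rw [mul_right_comm, ← pow_add, Nat.sub_add_cancel (by omega)]
    _ = k * ‖b‖ ^ (k - 1) * ‖g‖ := by rw [sum_const, card_range, nsmul_eq_mul, mul_assoc]

end NormedRing

section NormedAlgebra

variable {𝔸 : Type*} [NormedRing 𝔸] [NormedAlgebra ℝ 𝔸]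

noncomputable def dexpCoeff (i : ℕ) : ℝ := (-1) ^ i / (i + 1)!

/-- `dexpNeg a g` is `D = dexp_{-a}(g)`; `dexpNegDeriv a g` is `C`, which turns out to be the
derivative of `s ↦ dexpNeg (a + s • g) g` at `0`. -/
noncomputable def dexpNeg (a g : 𝔸) : 𝔸 :=
  ∑' i : ℕ, dexpCoeff i • (ad ℝ 𝔸 a ^ i) g

noncomputable def dexpNegDeriv (a g : 𝔸) : 𝔸 :=
  ∑' i : ℕ, dexpCoeff i • ∑ r ∈ range i, (ad ℝ 𝔸 a ^ r) (ad ℝ 𝔸 g ((ad ℝ 𝔸 a ^ (i - 1 - r)) g))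

lemma norm_dexpCoeff_le (i : ℕ) : ‖dexpCoeff i‖ ≤ (i ! : ℝ)⁻¹ := by
  rw [dexpCoeff, norm_div, norm_pow, norm_neg, norm_one, one_pow, one_div, Real.norm_natCast]
  exact inv_anti₀ (by positivity) (by exact_mod_cast Nat.factorial_le i.le_succ)

lemma norm_ad_apply_le (b y : 𝔸) : ‖ad ℝ 𝔸 b y‖ ≤ 2 * ‖b‖ * ‖y‖ := by
  rw [ad_apply, Ring.lie_def]
  calc ‖b * y - y * b‖ ≤ ‖b‖ * ‖y‖ + ‖y‖ * ‖b‖ :=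
        (norm_sub_le _ _).trans (add_le_add (norm_mul_le _ _) (norm_mul_le _ _))
    _ = 2 * ‖b‖ * ‖y‖ := by ring

lemma norm_ad_pow_apply_le (b y : 𝔸) (i : ℕ) : ‖(ad ℝ 𝔸 b ^ i) y‖ ≤ (2 * ‖b‖) ^ i * ‖y‖ := by
  induction i with
  | zero => simp
  | succ i ih =>
    rw [pow_succ', Module.End.mul_apply, pow_succ', mul_assoc (2 * ‖b‖)]
    exact (norm_ad_apply_le b _).trans (mul_le_mul_of_nonneg_left ih (by positivity))

lemma norm_sum_ad_pow_le (b h y : 𝔸) (i : ℕ) :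
    ‖∑ r ∈ range i, (ad ℝ 𝔸 b ^ r) (ad ℝ 𝔸 h ((ad ℝ 𝔸 b ^ (i - 1 - r)) y))‖ ≤
      i * (2 * ‖b‖) ^ (i - 1) * (2 * ‖h‖ * ‖y‖) := by
  refine (norm_sum_le _ _).trans ?_
  calc ∑ r ∈ range i, ‖(ad ℝ 𝔸 b ^ r) (ad ℝ 𝔸 h ((ad ℝ 𝔸 b ^ (i - 1 - r)) y))‖
      ≤ ∑ r ∈ range i, (2 * ‖b‖) ^ (i - 1) * (2 * ‖h‖ * ‖y‖) := sum_le_sum fun r hr => by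
        rw [mem_range] at hr
        calc ‖(ad ℝ 𝔸 b ^ r) (ad ℝ 𝔸 h ((ad ℝ 𝔸 b ^ (i - 1 - r)) y))‖
            ≤ (2 * ‖b‖) ^ r * (2 * ‖h‖ * ((2 * ‖b‖) ^ (i - 1 - r) * ‖y‖)) := by
              refine (norm_ad_pow_apply_le b _ r).trans
                (mul_le_mul_of_nonneg_left ?_ (by positivity))
              exact (norm_ad_apply_le h _).trans
                (mul_le_mul_of_nonneg_left (norm_ad_pow_apply_le b y _) (by positivity))
          _ = (2 * ‖b‖) ^ (r + (i - 1 - r)) * (2 * ‖h‖ * ‖y‖) := by ring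
          _ = (2 * ‖b‖) ^ (i - 1) * (2 * ‖h‖ * ‖y‖) := by rw [Nat.add_sub_cancel' (by omega)]
    _ = i * (2 * ‖b‖) ^ (i - 1) * (2 * ‖h‖ * ‖y‖) := by
        rw [sum_const, card_range, nsmul_eq_mul, ← mul_assoc]

lemma summable_norm_dexpCoeff_smul (b g : 𝔸) :
    Summable fun i : ℕ => ‖dexpCoeff i • (ad ℝ 𝔸 b ^ i) g‖ := by
  refine .of_nonneg_of_le (fun i => norm_nonneg _) (fun i => ?_)
    ((Real.summable_pow_div_factorial (2 * ‖b‖)).mul_right ‖g‖)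
  rw [norm_smul, div_mul_eq_mul_div, div_eq_inv_mul]
  exact mul_le_mul (norm_dexpCoeff_le i) (norm_ad_pow_apply_le b g i) (norm_nonneg _)
    (by positivity)

lemma sum_range_succ_expTerm_mul_dexpTerm (b g : 𝔸) (k : ℕ) :
    ∑ j ∈ range (k + 1), ((j ! : ℝ)⁻¹ • b ^ j) * (dexpCoeff (k - j) • (ad ℝ 𝔸 b ^ (k - j)) g) =
      ((k + 1)! : ℝ)⁻¹ • ∑ i ∈ range (k + 1), b ^ (k - i) * g * b ^ i := by
  have hsum := sum_pow_mul_mul_pow_eq_sum_ad (K := ℝ) b g (k + 1)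
  rw [Nat.add_sub_cancel] at hsum
  rw [hsum, smul_sum, ← sum_range_reflect]
  refine sum_congr rfl fun j hj => ?_
  rw [mem_range] at hj
  rw [Nat.add_sub_cancel, show k - (k - j) = j by omega, smul_mul_smul_comm, smul_smul]
  congr 1
  rw [dexpCoeff, Nat.cast_choose ℝ (show j + 1 ≤ k + 1 by omega),
    show k + 1 - (j + 1) = k - j by omega]
  field_simp

theorem hasDerivAt_ad_pow_add_smul (a h y : 𝔸) (i : ℕ) (s : ℝ) :
    HasDerivAt (fun s : ℝ => (ad ℝ 𝔸 (a + s • h) ^ i) y)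
      (∑ r ∈ range i, (ad ℝ 𝔸 (a + s • h) ^ r) (ad ℝ 𝔸 h ((ad ℝ 𝔸 (a + s • h) ^ (i - 1 - r)) y)))
      s := by
  have hline : HasDerivAt (fun s : ℝ => a + s • h) h s := by
    simpa using ((hasDerivAt_id s).smul_const h).const_add a
  induction i with
  | zero => simpa using hasDerivAt_const s y
  | succ i ih =>
    set b := a + s • h
    have hsum : ∑ r ∈ range (i + 1), (ad ℝ 𝔸 b ^ r) (ad ℝ 𝔸 h ((ad ℝ 𝔸 b ^ (i + 1 - 1 - r)) y)) =
        ad ℝ 𝔸 h ((ad ℝ 𝔸 b ^ i) y) +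
          ad ℝ 𝔸 b (∑ r ∈ range i, (ad ℝ 𝔸 b ^ r) (ad ℝ 𝔸 h ((ad ℝ 𝔸 b ^ (i - 1 - r)) y))) := by
      rw [sum_range_succ', map_sum, add_comm]
      simp only [pow_succ', Module.End.mul_apply, pow_zero, Module.End.one_apply, Nat.sub_zero,
        Nat.add_sub_cancel, Nat.sub_sub, add_comm 1]
    have hfun : (fun t : ℝ => (ad ℝ 𝔸 (a + t • h) ^ (i + 1)) y) = fun t : ℝ =>
        (a + t • h) * (ad ℝ 𝔸 (a + t • h) ^ i) y - (ad ℝ 𝔸 (a + t • h) ^ i) y * (a + t • h) :=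
      funext fun t => by rw [pow_succ', Module.End.mul_apply, ad_apply, Ring.lie_def]
    rw [hfun, hsum, ad_apply, ad_apply, Ring.lie_def, Ring.lie_def]
    exact ((hline.fun_mul ih).fun_sub (ih.fun_mul hline)).congr_deriv (by abel)

variable [CompleteSpace 𝔸]

theorem exp_mul_dexpNeg (b g : 𝔸) :
    exp b * dexpNeg b g =
      ∑' k : ℕ, (k ! : ℝ)⁻¹ • ∑ i ∈ range k, b ^ (k - 1 - i) * g * b ^ i := by
  have hexp := norm_expSeries_summable' (𝕂 := ℝ) b
  have hdexp := summable_norm_dexpCoeff_smul b g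
  have hcauchy := (summable_norm_sum_mul_range_of_summable_norm hexp hdexp).of_norm
  simp only [sum_range_succ_expTerm_mul_dexpTerm] at hcauchy
  rw [exp_eq_tsum ℝ, dexpNeg, tsum_mul_tsum_eq_tsum_sum_range_of_summable_norm hexp hdexp,
    tsum_congr (sum_range_succ_expTerm_mul_dexpTerm b g),
    tsum_eq_zero_add' (f := fun k : ℕ => (k ! : ℝ)⁻¹ • ∑ i ∈ range k, b ^ (k - 1 - i) * g * b ^ i)
      (by simpa using hcauchy)]
  simp

theorem hasDerivAt_exp_add_smul (a g : 𝔸) (s₀ : ℝ) :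
    HasDerivAt (fun s : ℝ => exp (a + s • g)) (exp (a + s₀ • g) * dexpNeg (a + s₀ • g) g) s₀ := by
  rw [exp_mul_dexpNeg, exp_eq_tsum ℝ]
  beta_reduce
  refine hasDerivAt_tsum_add_smul
    (F' := fun k b => (k ! : ℝ)⁻¹ • ∑ i ∈ range k, b ^ (k - 1 - i) * g * b ^ i)
    (u := fun k M => k * M ^ (k - 1) / k ! * ‖g‖) a g
    (fun k s => ?_) (fun k b M hb => ?_)
    (fun M => (summable_nat_mul_pow_pred_div_factorial M).mul_right _)
    (expSeries_summable' (𝕂 := ℝ)) s₀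
  · have := (((hasDerivAt_id s).smul_const g).const_add a).fun_pow' k
    simpa [Nat.pred_eq_sub_one] using this.fun_const_smul (k ! : ℝ)⁻¹
  · rw [norm_smul, norm_inv, Real.norm_natCast, div_mul_eq_mul_div, div_eq_inv_mul]
    refine mul_le_mul_of_nonneg_left ((norm_sum_pow_mul_mul_pow_le b g k).trans ?_) (by positivity)
    gcongr

theorem hasDerivAt_dexpNeg_add_smul (a g : 𝔸) (s₀ : ℝ) :
    HasDerivAt (fun s : ℝ => dexpNeg (a + s • g) g) (dexpNegDeriv (a + s₀ • g) g) s₀ := by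
  refine hasDerivAt_tsum_add_smul (F := fun i b => dexpCoeff i • (ad ℝ 𝔸 b ^ i) g)
    (F' := fun i b => dexpCoeff i •
      ∑ r ∈ range i, (ad ℝ 𝔸 b ^ r) (ad ℝ 𝔸 g ((ad ℝ 𝔸 b ^ (i - 1 - r)) g)))
    (u := fun i M => i * (2 * M) ^ (i - 1) / i ! * (2 * ‖g‖ * ‖g‖)) a g
    (fun i s => (hasDerivAt_ad_pow_add_smul a g g i s).fun_const_smul (dexpCoeff i))
    (fun i b M hb => ?_) (fun M => (summable_nat_mul_pow_pred_div_factorial _).mul_right _)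
    (fun b => (summable_norm_dexpCoeff_smul b g).of_norm) s₀
  rw [norm_smul, div_mul_eq_mul_div, div_eq_inv_mul]
  refine mul_le_mul (norm_dexpCoeff_le i) ((norm_sum_ad_pow_le b g g i).trans ?_) (norm_nonneg _)
    (by positivity)
  gcongr

theorem hasDerivAt_deriv_exp_add_smul (a g : 𝔸) (s : ℝ) :
    HasDerivAt (deriv fun s : ℝ => exp (a + s • g))
      (exp (a + s • g) * (dexpNeg (a + s • g) g * dexpNeg (a + s • g) g +
        dexpNegDeriv (a + s • g) g)) s := by
  rw [funext fun s => (hasDerivAt_exp_add_smul a g s).deriv]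
  exact ((hasDerivAt_exp_add_smul a g s).fun_mul (hasDerivAt_dexpNeg_add_smul a g s)).congr_deriv
    (by rw [mul_add, mul_assoc])

theorem second_deriv_exp_add_smul (x γ : 𝔸) :
    (∀ s : ℝ, DifferentiableAt ℝ (fun s : ℝ => exp (x + s • γ)) s) ∧
    (∀ s : ℝ, DifferentiableAt ℝ (deriv fun s : ℝ => exp (x + s • γ)) s) ∧
    deriv (deriv fun s : ℝ => exp (x + s • γ)) 0 =
      exp x * (dexpNeg x γ * dexpNeg x γ + dexpNegDeriv x γ) := by
  refine ⟨fun s => (hasDerivAt_exp_add_smul x γ s).differentiableAt,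
    fun s => (hasDerivAt_deriv_exp_add_smul x γ s).differentiableAt, ?_⟩
  rw [(hasDerivAt_deriv_exp_add_smul x γ 0).deriv, zero_smul, add_zero]

end NormedAlgebra

/- The `L∞` operator norm makes matrices a normed algebra. It induces the same topology as the
entrywise norm used in `second_deriv_exp_line`, and derivatives only depend on the topology. -/
section

attribute [local instance] Matrix.linftyOpNormedRing Matrix.linftyOpNormedAlgebra

theorem Matrix.second_deriv_exp_add_smul {n : ℕ} (x γ : Matrix (Fin n) (Fin n) ℝ) :
    (∀ s : ℝ, DifferentiableAt ℝ (fun s : ℝ => exp (x + s • γ)) s) ∧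
    (∀ s : ℝ, DifferentiableAt ℝ (deriv fun s : ℝ => exp (x + s • γ)) s) ∧
    deriv (deriv fun s : ℝ => exp (x + s • γ)) 0 =
      exp x * (dexpNeg x γ * dexpNeg x γ + dexpNegDeriv x γ) :=
  _root_.second_deriv_exp_add_smul x γ

end

attribute [local instance] Matrix.normedAddCommGroup Matrix.normedSpace

/-- **Lemma 2 of the Appendix (second directional derivative of the matrix
exponential).** For matrices `x, γ`, the map `s ↦ exp (x + s • γ)` is twice
differentiable, and its second derivative at `s = 0` equals `exp x * (D² + C)`, where
`D = dexp(−x)(γ) = ∑_{i=0}^∞ ((−1)^i/(i+1)!)·ad_x^i (γ)` and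
`C = ∑_{i=1}^∞ ((−1)^i/(i+1)!) ∑_{r=0}^{i−1} ad_x^r (ad_γ (ad_x^{i−1−r} γ))`. -/
theorem second_deriv_exp_line {n : ℕ} (x γ : Matrix (Fin n) (Fin n) ℝ) :
    (∀ s : ℝ, DifferentiableAt ℝ (fun s : ℝ => exp (x + s • γ)) s) ∧
    (∀ s : ℝ, DifferentiableAt ℝ (deriv (fun s : ℝ => exp (x + s • γ))) s) ∧
    deriv (deriv (fun s : ℝ => exp (x + s • γ))) 0 =
      exp x *
        ((∑' i : ℕ, ((-1 : ℝ) ^ i / (Nat.factorial (i + 1) : ℝ)) • ((adM x ^ i) γ)) *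
          (∑' i : ℕ, ((-1 : ℝ) ^ i / (Nat.factorial (i + 1) : ℝ)) • ((adM x ^ i) γ)) +
        ∑' i : ℕ, ((-1 : ℝ) ^ i / (Nat.factorial (i + 1) : ℝ)) •
          ∑ r ∈ Finset.range i, (adM x ^ r) (adM γ ((adM x ^ (i - 1 - r)) γ))) := by
  have hadM : @adM n = ad ℝ (Matrix (Fin n) (Fin n) ℝ) :=
    (ad_eq_lmul_left_sub_lmul_right (R := ℝ) _).symm
  rw [hadM]
  exact Matrix.second_deriv_exp_add_smul x γ
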